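/- For α ≠ 0 and μ ≠ 0, the Milonni system satisfies q̇ = P(q)·∇H_M(q), where P(q) = (1/(αμ²))·[[0, 0, -y, 0, 0], [0, 0, x, αz, 0], [y, -x, 0, -αy, -αx], [0, -αz, αy, 0, -α(αz-μ²)], [0, 0, αx, α(αz-μ²), 0]] and H_M(q) = (1/2)α²y² - αyB + αμ²z + (1/2)μ²E² + (1/2)B². -/

import Mathlib

/-- H_M = (1/2)α²y² - αyB + αμ²z + (1/2)μ²E² + (1/2)B². -/
noncomputable def HM (α μ : ℝ) : (Fin 5 → ℝ) → ℝ :=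
  fun q => (1/2) * α ^ 2 * q 1 ^ 2 - α * q 1 * q 4 + α * μ ^ 2 * q 2
    + (1/2) * μ ^ 2 * q 3 ^ 2 + (1/2) * q 4 ^ 2

/-- The gradient of a function on ℝ⁵. -/
noncomputable def grad5 (f : (Fin 5 → ℝ) → ℝ) (q : Fin 5 → ℝ) : Fin 5 → ℝ :=
  fun i => fderiv ℝ f q (Pi.single i 1)

/-- The antisymmetric matrix P(q) for the Milonni system. -/
noncomputable def Pmat (α μ : ℝ) (q : Fin 5 → ℝ) : Matrix (Fin 5) (Fin 5) ℝ :=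
  (1/(α * μ ^ 2)) • !![0, 0, -q 1, 0, 0;
                       0, 0, q 0, α * q 2, 0;
                       q 1, -q 0, 0, -α * q 1, -α * q 0;
                       0, -α * q 2, α * q 1, 0, -α * (α * q 2 - μ ^ 2);
                       0, 0, α * q 0, α * (α * q 2 - μ ^ 2), 0]


theorem grad5_eq_of_hasFDerivAt {f : (Fin 5 → ℝ) → ℝ} {f' : (Fin 5 → ℝ) →L[ℝ] ℝ}
    {q : Fin 5 → ℝ} (hf : HasFDerivAt f f' q) : grad5 f q = fun i => f' (Pi.single i 1) := by
  rw [← hf.fderiv]; rfl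

theorem grad5_HM (α μ : ℝ) (q : Fin 5 → ℝ) :
    grad5 (HM α μ) q = ![0, α ^ 2 * q 1 - α * q 4, α * μ ^ 2, μ ^ 2 * q 3, q 4 - α * q 1] := by
  have hx (i : Fin 5) :
      HasFDerivAt (fun p : Fin 5 → ℝ => p i) (ContinuousLinearMap.proj (R := ℝ) i) q :=
    hasFDerivAt_apply i q
  have hHM : HasFDerivAt (HM α μ) _ q :=
    ((((((hx 1).pow 2).const_mul ((1/2) * α ^ 2)).sub
      (((hx 1).const_mul α).mul (hx 4))).add
      ((hx 2).const_mul (α * μ ^ 2))).add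
      (((hx 3).pow 2).const_mul ((1/2) * μ ^ 2))).add
      (((hx 4).pow 2).const_mul (1/2))
  rw [grad5_eq_of_hasFDerivAt hHM]
  funext i
  fin_cases i <;> simp <;> ring

/-- For α ≠ 0, μ ≠ 0 the Milonni system takes the form q̇ = P(q)·∇H_M(q). -/
theorem Milonni_form (α μ : ℝ) (hα : α ≠ 0) (hμ : μ ≠ 0) (q : Fin 5 → ℝ) :
    (Pmat α μ q).mulVec (grad5 (HM α μ) q) =
      ![-q 1, q 0 + q 2 * q 3, -q 1 * q 3, q 4,
        α * (q 0 + q 2 * q 3) - μ ^ 2 * q 3] := by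
  rw [grad5_HM]
  funext i
  fin_cases i <;> simp [Pmat, Matrix.mulVec, dotProduct, Fin.sum_univ_five] <;> field_simp <;> ring
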